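/- If player B has a weakly dominant pure strategy x*_B in Γ, then there is no contract D_A such that in every Nash equilibrium (σ_A, σ_B) of Γ(D_A), both player A's payoff σ_A^T (U_A - D_A) σ_B strictly exceeds A's payoff in some Nash equilibrium of Γ with B playing x*_B, and the transfer σ_A^T D_A σ_B is strictly positive. -/

import Mathlib

open Finset

/-- Mixed strategies over `n` pure strategies: nonnegative vectors summing to 1. -/
def mixed (n : ℕ) : Set (Fin n → ℝ) := {σ | (∀ i, 0 ≤ σ i) ∧ ∑ i, σ i = 1}

/-- Expected payoff `σ_A^T U σ_B`. -/
def pay {m n : ℕ} (U : Fin m → Fin n → ℝ) (a : Fin m → ℝ) (b : Fin n → ℝ) : ℝ :=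
  ∑ i, ∑ j, a i * U i j * b j

/-- The pure strategy `k` as a mixed strategy. -/
def pureStrat {n : ℕ} (k : Fin n) : Fin n → ℝ := fun i => if i = k then 1 else 0

/-- `b` is a best response of the column player (payoffs `UB`) to `a`. -/
def BRB {m n : ℕ} (UB : Fin m → Fin n → ℝ) (a : Fin m → ℝ) (b : Fin n → ℝ) : Prop :=
  b ∈ mixed n ∧ ∀ b' ∈ mixed n, pay UB a b' ≤ pay UB a b

/-- `a` is a best response of the row player (payoffs `UA`) to `b`. -/
def BRA {m n : ℕ} (UA : Fin m → Fin n → ℝ) (a : Fin m → ℝ) (b : Fin n → ℝ) : Prop :=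
  a ∈ mixed m ∧ ∀ a' ∈ mixed m, pay UA a' b ≤ pay UA a b

/-- Nash equilibrium of the bimatrix game `(UA, UB)`. -/
def NashEq {m n : ℕ} (UA UB : Fin m → Fin n → ℝ) (a : Fin m → ℝ) (b : Fin n → ℝ) : Prop :=
  a ∈ mixed m ∧ b ∈ mixed n ∧
  (∀ a' ∈ mixed m, pay UA a' b ≤ pay UA a b) ∧
  (∀ b' ∈ mixed n, pay UB a b' ≤ pay UB a b)

/-!
Contracts leave B's payoffs untouched, so the dominant strategy `xB` remains a best response to
everything in `Γ(D_A)`; paired with a pure best response `k` of A it gives an equilibrium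
`(k, xB)` of `Γ(D_A)`. There A earns `U_A(k, xB) - D_A(k, xB) ≤ U_A(xA, xB) - D_A(k, xB)`,
because `xA` is a best response to `xB` in `Γ`, so A can only gain if the transfer is negative.
-/

open Matrix

lemma pureStrat_eq_single {n : ℕ} (k : Fin n) : pureStrat k = Pi.single k 1 := by
  ext i
  simp [pureStrat, Pi.single_apply]

lemma pureStrat_mem_mixed {n : ℕ} (k : Fin n) : pureStrat k ∈ mixed n := by
  refine ⟨fun i => ?_, by simp [pureStrat]⟩
  unfold pureStrat
  split_ifs <;> norm_num

lemma pay_eq_dotProduct_mulVec {m n : ℕ} (U : Fin m → Fin n → ℝ) (a : Fin m → ℝ)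
    (b : Fin n → ℝ) : pay U a b = a ⬝ᵥ (U *ᵥ b) := by
  simp only [pay, dotProduct, mulVec, Finset.mul_sum, mul_assoc]

lemma pay_sub {m n : ℕ} (U D : Fin m → Fin n → ℝ) (a : Fin m → ℝ) (b : Fin n → ℝ) :
    pay (U - D) a b = pay U a b - pay D a b := by
  simp only [pay, Pi.sub_apply, mul_sub, sub_mul, Finset.sum_sub_distrib]

lemma pay_pureStrat_left {m n : ℕ} (U : Fin m → Fin n → ℝ) (k : Fin m) (b : Fin n → ℝ) :
    pay U (pureStrat k) b = (U *ᵥ b) k := by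
  rw [pay_eq_dotProduct_mulVec, pureStrat_eq_single, single_dotProduct, one_mul]

lemma dotProduct_le_of_mem_mixed {n : ℕ} {a v : Fin n → ℝ} {c : ℝ} (ha : a ∈ mixed n)
    (hv : ∀ i, v i ≤ c) : a ⬝ᵥ v ≤ c :=
  calc a ⬝ᵥ v ≤ ∑ i, a i * c :=
        Finset.sum_le_sum fun i _ => mul_le_mul_of_nonneg_left (hv i) (ha.1 i)
    _ = c := by rw [← Finset.sum_mul, ha.2, one_mul]

lemma exists_pureStrat_BRA {m n : ℕ} [Nonempty (Fin m)] (U : Fin m → Fin n → ℝ)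
    (b : Fin n → ℝ) : ∃ k : Fin m, BRA U (pureStrat k) b := by
  obtain ⟨k, hk⟩ := Finite.exists_max (U *ᵥ b)
  refine ⟨k, pureStrat_mem_mixed k, fun a ha => ?_⟩
  rw [pay_eq_dotProduct_mulVec, pay_pureStrat_left]
  exact dotProduct_le_of_mem_mixed ha hk

lemma NashEq.of_BRA_of_BRB {m n : ℕ} {UA UB : Fin m → Fin n → ℝ} {a : Fin m → ℝ}
    {b : Fin n → ℝ} (hA : BRA UA a b) (hB : BRB UB a b) : NashEq UA UB a b :=
  ⟨hA.1, hB.1, hA.2, hB.2⟩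

lemma exists_nashEq_pureStrat_of_dominant {m n : ℕ} [Nonempty (Fin m)]
    (UA UB : Fin m → Fin n → ℝ) {xB : Fin n}
    (hdom : ∀ a ∈ mixed m, ∀ b ∈ mixed n, pay UB a b ≤ pay UB a (pureStrat xB)) :
    ∃ k : Fin m, NashEq UA UB (pureStrat k) (pureStrat xB) := by
  obtain ⟨k, hk⟩ := exists_pureStrat_BRA UA (pureStrat xB)
  exact ⟨k, NashEq.of_BRA_of_BRB hk ⟨pureStrat_mem_mixed xB, hdom _ hk.1⟩⟩

/-- Proposition 4: if B has a weakly dominant pure strategy `xB` and `(xA, xB)` is a pure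
Nash equilibrium of `Γ`, there is no contract `DA` such that in every Nash equilibrium of
`Γ(D_A)` both A strictly gains relative to that equilibrium of `Γ` and the miner's
expected transfer is strictly positive. -/
theorem stmt_2 {m n : ℕ} (UA UB : Fin m → Fin n → ℝ) (xB : Fin n)
    (hdom : ∀ a ∈ mixed m, ∀ b ∈ mixed n, pay UB a b ≤ pay UB a (pureStrat xB))
    (xA : Fin m) (hne : NashEq UA UB (pureStrat xA) (pureStrat xB)) :
    ¬ ∃ DA : Fin m → Fin n → ℝ, ∀ (a : Fin m → ℝ) (b : Fin n → ℝ),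
        NashEq (UA - DA) UB a b →
          pay (UA - DA) a b > pay UA (pureStrat xA) (pureStrat xB) ∧
          pay DA a b > 0 := by
  rintro ⟨DA, hDA⟩
  have : Nonempty (Fin m) := ⟨xA⟩
  obtain ⟨k, hk⟩ := exists_nashEq_pureStrat_of_dominant (UA - DA) UB hdom
  obtain ⟨hgain, htransfer⟩ := hDA _ _ hk
  have hxA := hne.2.2.1 _ (pureStrat_mem_mixed k)
  rw [pay_sub] at hgain
  linarith
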